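/- Two partitions λ and μ of n have the same e-core if and only if C_f(λ) = C_f(μ) for all f ∈ Z/eZ, where C_f(λ) is the number of nodes (i,j) ∈ [λ] with j - i ≡ f (mod e). -/

import Mathlib

noncomputable section

/-- A partition: a weakly decreasing sequence of natural numbers with finite support.
Rows and columns are indexed from `0`. -/
structure Partition' where
  parts : ℕ → ℕ
  antitone : ∀ ⦃i j : ℕ⦄, i ≤ j → parts j ≤ parts i
  finite_support : ∃ N, ∀ i, N ≤ i → parts i = 0

namespace Partition'

/-- The Young diagram of a partition: cells `(i, j)` with `j < λ_i` (0-indexed). -/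
def cells (p : Partition') : Set (ℕ × ℕ) := {x | x.2 < p.parts x.1}

/-- The size `|λ|` of a partition. -/
def size (p : Partition') : ℕ := p.cells.ncard

/-- Two cells are adjacent if they share an edge. -/
def adjacent (a b : ℕ × ℕ) : Prop :=
  (a.1 = b.1 ∧ (a.2 + 1 = b.2 ∨ b.2 + 1 = a.2)) ∨
  (a.2 = b.2 ∧ (a.1 + 1 = b.1 ∨ b.1 + 1 = a.1))

/-- A set of cells is (edge-)connected. -/
def ConnectedSet (S : Set (ℕ × ℕ)) : Prop :=
  ∀ a ∈ S, ∀ b ∈ S, ∃ (n : ℕ) (f : ℕ → ℕ × ℕ),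
    f 0 = a ∧ f n = b ∧ (∀ k < n, adjacent (f k) (f (k + 1))) ∧ (∀ k ≤ n, f k ∈ S)

/-- A set of cells contains no 2×2 square. -/
def No2x2 (S : Set (ℕ × ℕ)) : Prop :=
  ∀ i j : ℕ, ¬ ((i, j) ∈ S ∧ (i + 1, j) ∈ S ∧ (i, j + 1) ∈ S ∧ (i + 1, j + 1) ∈ S)

/-- `AddRimHook p q h` : the partition `q` is obtained from `p` by wrapping on
(a connected skew shape of size `h` containing no 2×2 square, i.e.) a rim hook of length `h`. -/
def AddRimHook (p q : Partition') (h : ℕ) : Prop :=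
  p.cells ⊆ q.cells ∧ (q.cells \ p.cells).ncard = h ∧
    ConnectedSet (q.cells \ p.cells) ∧ No2x2 (q.cells \ p.cells)

/-- The length `λ'_j` of column `j` (0-indexed) of a partition. -/
def colLen (p : Partition') (j : ℕ) : ℕ := {i : ℕ | (i, j) ∈ p.cells}.ncard

/-- The rim hook `r^λ_x` attached to the node `x = (i,j)` of `λ`. -/
def rimHook (p : Partition') (i j : ℕ) : Set (ℕ × ℕ) :=
  {y ∈ p.cells | i ≤ y.1 ∧ j ≤ y.2 ∧ (y.1 + 1, y.2 + 1) ∉ p.cells}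

/-- The leg length of the rim hook `r^λ_{(i,j)}`. -/
def legLength (p : Partition') (i j : ℕ) : ℕ := p.colLen j - 1 - i

/-- The hook length `h^λ_{(i,j)}` of the node `(i,j) ∈ [λ]` (0-indexed). -/
def hookLen (p : Partition') (i j : ℕ) : ℕ := p.parts i + p.colLen j - i - j - 1

/-- The residue mod `e` of the foot node of a rim hook `r^λ_{(i,j)}`; the foot node is
`(λ'_j - 1, j)` (0-indexed), so its residue is `j - λ'_j + 1 = (j+1) - λ'_j` mod `e`. -/
def footRes (e : ℕ) (p : Partition') (j : ℕ) : ZMod e :=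
  (((j : ℤ) + 1 - p.colLen j : ℤ) : ZMod e)

/-- `C_f(λ)` : the number of nodes of `λ` with residue `f` mod `e`, using charge `c`
(the residue of node `(i,j)` (0-indexed) is `j - i + c` mod `e`). -/
def resCount (e : ℕ) (c : ℤ) (p : Partition') (f : ZMod e) : ℕ :=
  {x ∈ p.cells | (((x.2 : ℤ) - x.1 + c : ℤ) : ZMod e) = f}.ncard

/-- The set of β-numbers of `p` with charge `c` : `β_i = λ_i - i + c` (1-indexed rows). -/
def betaSet (p : Partition') (c : ℤ) : Set ℤ :=
  {z | ∃ i : ℕ, z = (p.parts i : ℤ) - (i + 1) + c}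

/-- The dominance order on partitions. -/
def Dominates (p q : Partition') : Prop :=
  ∀ m : ℕ, ∑ i ∈ Finset.range m, q.parts i ≤ ∑ i ∈ Finset.range m, p.parts i

end Partition'

/-!
Removing an `e`-rim hook deletes `e` cells whose contents are pairwise distinct (there is no
`2 × 2` square) and consecutive (the hook is connected), hence exactly one cell of each residue.
So along a chain of removals all residue counts drop by the same amount, and equal sizes force
equal drops.

Conversely, encode a partition by its β-numbers `β i = λ i - i - 1`. Sliding a bead from `β i` to
a vacant position `β i - e` removes an `e`-rim hook, so the β-set of an `e`-core is closed under
`x ↦ x - e`: on every runner of the `e`-abacus the beads are pushed down. Telescoping along each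
row, `C_f - C_{f+1}` counts the beads congruent to `f` among the first `N` β-numbers, up to a term
that does not depend on the partition. Two cores whose residue counts differ by a constant
therefore have the same number of beads on each runner, hence the same β-set.
-/

namespace Partition'

def content (x : ℕ × ℕ) : ℤ := (x.2 : ℤ) - x.1

def beta (p : Partition') (i : ℕ) : ℤ := (p.parts i : ℤ) - i - 1

def IsCore (e : ℕ) (p : Partition') : Prop := ¬ ∃ s, AddRimHook s p e

variable {e : ℕ} {p q s : Partition'}

section

open Set

lemma mem_cells {a c : ℕ} : (a, c) ∈ p.cells ↔ c < p.parts a := Iff.rfl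

lemma mem_cells_sdiff {a c : ℕ} :
    (a, c) ∈ q.cells \ s.cells ↔ s.parts a ≤ c ∧ c < q.parts a := by
  rw [mem_sdiff, mem_cells, mem_cells, not_lt, and_comm]

lemma mem_cells_sdiff_iff_beta {x : ℕ × ℕ} :
    x ∈ q.cells \ s.cells ↔ s.beta x.1 < content x ∧ content x ≤ q.beta x.1 := by
  obtain ⟨a, c⟩ := x
  rw [mem_cells_sdiff]
  simp only [beta, content]
  omega

lemma cells_finite (p : Partition') : p.cells.Finite := by
  obtain ⟨N, hN⟩ := p.finite_support
  refine ((finite_Iio N).prod (finite_Iio (p.parts 0))).subset fun ⟨a, c⟩ hx => ?_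
  rw [mem_cells] at hx
  refine ⟨mem_Iio.mpr ?_, lt_of_lt_of_le hx (p.antitone (Nat.zero_le a))⟩
  by_contra! h
  simp [hN a h] at hx

lemma beta_strictAnti (p : Partition') : StrictAnti p.beta := fun a b hab => by
  have := p.antitone hab.le
  unfold beta; omega

lemma neg_sub_one_le_beta (p : Partition') (i : ℕ) : -(i : ℤ) - 1 ≤ p.beta i := by
  unfold beta; omega

lemma beta_eq_of_le {N i : ℕ} (hN : ∀ i, N ≤ i → p.parts i = 0) (hi : N ≤ i) :
    p.beta i = -(i : ℤ) - 1 := by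
  simp [beta, hN i hi]

lemma mem_range_beta_eq_of_le {N : ℕ} (hN : ∀ i, N ≤ i → p.parts i = 0) {x : ℤ}
    (hx : x ≤ -(N : ℤ) - 1) : x ∈ Set.range p.beta :=
  ⟨(-x - 1).toNat, by rw [beta_eq_of_le hN (by omega)]; omega⟩

lemma eq_of_beta_eq (h : p.beta = q.beta) : p = q := by
  obtain ⟨pp, _, _⟩ := p
  obtain ⟨qq, _, _⟩ := q
  obtain rfl : pp = qq := funext fun i => by have := congrFun h i; simp only [beta] at this; omega
  rfl

lemma exists_beta_succ_lt_le (p : Partition') {i₀ : ℕ} {k : ℤ} (hk : k ≤ p.beta i₀) :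
    ∃ a, i₀ ≤ a ∧ p.beta (a + 1) < k ∧ k ≤ p.beta a := by
  by_contra! H
  have hge : ∀ n, k ≤ p.beta (i₀ + n) := by
    intro n
    induction n with
    | zero => exact hk
    | succ n ih => by_contra! h; exact absurd ih (not_le.mpr (H _ (by omega) h))
  obtain ⟨N, hN⟩ := p.finite_support
  have := hge (N + (-k).toNat)
  rw [beta_eq_of_le hN (by omega)] at this
  omega

lemma content_injOn_of_no2x2 (h2 : No2x2 (q.cells \ s.cells)) :
    InjOn content (q.cells \ s.cells) := by
  have key : ∀ x ∈ q.cells \ s.cells, ∀ y ∈ q.cells \ s.cells, x.1 < y.1 →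
      content x ≠ content y := by
    rintro ⟨a, c⟩ hx ⟨b, d⟩ hy (hab : a < b) hxy
    rw [mem_cells_sdiff] at hx hy
    have hqb := q.antitone (show a + 1 ≤ b by omega)
    have hq1 := q.antitone (show a ≤ a + 1 by omega)
    have hs1 := s.antitone (show a ≤ a + 1 by omega)
    simp only [content] at hxy
    exact h2 a c ⟨mem_cells_sdiff.mpr hx, mem_cells_sdiff.mpr ⟨by omega, by omega⟩,
      mem_cells_sdiff.mpr ⟨by omega, by omega⟩, mem_cells_sdiff.mpr ⟨by omega, by omega⟩⟩
  intro x hx y hy hxy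
  rcases lt_trichotomy x.1 y.1 with h | h | h
  · exact absurd hxy (key x hx y hy h)
  · exact Prod.ext h (by unfold content at hxy; omega)
  · exact absurd hxy.symm (key y hy x hx h)

lemma content_le_of_adjacent {x y : ℕ × ℕ} (h : adjacent x y) : content y ≤ content x + 1 := by
  unfold content; rcases h with ⟨h1, h2⟩ | ⟨h1, h2⟩ <;> omega

lemma ordConnected_content_image {S : Set (ℕ × ℕ)} (hS : ConnectedSet S) :
    (content '' S).OrdConnected := by
  have hpath : ∀ (n : ℕ) (f : ℕ → ℕ × ℕ), (∀ k < n, adjacent (f k) (f (k + 1))) →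
      (∀ k ≤ n, f k ∈ S) → Icc (content (f 0)) (content (f n)) ⊆ content '' S := by
    intro n
    induction n with
    | zero => intro f _ hS z hz; exact ⟨f 0, hS 0 le_rfl, le_antisymm hz.1 hz.2⟩
    | succ n ih =>
      intro f hadj hS z hz
      by_cases hzn : z ≤ content (f n)
      · exact ih f (fun k hk => hadj k (by omega)) (fun k hk => hS k (by omega)) ⟨hz.1, hzn⟩
      · have := content_le_of_adjacent (hadj n (by omega))
        obtain ⟨-, hz⟩ := hz
        exact ⟨f (n + 1), hS (n + 1) le_rfl, by omega⟩
  refine ⟨?_⟩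
  rintro _ ⟨a, ha, rfl⟩ _ ⟨b, hb, rfl⟩
  obtain ⟨n, f, rfl, rfl, hadj, hmem⟩ := hS a ha b hb
  exact hpath n f hadj hmem

lemma adjacent_symm {x y : ℕ × ℕ} (h : adjacent x y) : adjacent y x := by
  unfold adjacent at *; omega

/-- Otherwise `(a, c + 1)` or `(a - 1, c)` would be a second cell of the skew shape with the
content of `y`. -/
lemma adjacent_of_content_eq_add_one (hinj : InjOn content (q.cells \ s.cells)) {x y : ℕ × ℕ}
    (hx : x ∈ q.cells \ s.cells) (hy : y ∈ q.cells \ s.cells) (hxy : content y = content x + 1) :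
    adjacent x y := by
  obtain ⟨a, c⟩ := x
  obtain ⟨b, d⟩ := y
  have hx' := mem_cells_sdiff.mp hx
  have hy' := mem_cells_sdiff.mp hy
  simp only [content] at hxy
  rcases lt_trichotomy a b with hab | rfl | hba
  · have hq := q.antitone hab.le
    have hmem : (a, c + 1) ∈ q.cells \ s.cells := mem_cells_sdiff.mpr ⟨by omega, by omega⟩
    have := congrArg Prod.fst (hinj hmem hy (by simp only [content]; omega))
    omega
  · left; omega
  · rcases Nat.lt_or_ge (b + 1) a with hba' | hba'
    · have hq := q.antitone (show a - 1 ≤ a by omega)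
      have hs := s.antitone (show b ≤ a - 1 by omega)
      have hmem : (a - 1, c) ∈ q.cells \ s.cells := mem_cells_sdiff.mpr ⟨by omega, by omega⟩
      have := congrArg Prod.fst (hinj hmem hy (by simp only [content]; omega))
      omega
    · right; omega

lemma connectedSet_of_injOn_content (hinj : InjOn content (q.cells \ s.cells))
    (hconv : (content '' (q.cells \ s.cells)).OrdConnected) : ConnectedSet (q.cells \ s.cells) := by
  set D := q.cells \ s.cells
  set g := Function.invFunOn content D
  have hg : ∀ k ∈ content '' D, g k ∈ D ∧ content (g k) = k := fun k ⟨x, hx, hk⟩ =>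
    ⟨Function.invFunOn_mem ⟨x, hx, hk⟩, Function.invFunOn_eq ⟨x, hx, hk⟩⟩
  have hpath : ∀ x ∈ D, ∀ y ∈ D, ∀ ε : ℤ, (ε = 1 ∨ ε = -1) → ∀ n : ℕ,
      content y = content x + ε * n → ∃ f : ℕ → ℕ × ℕ, f 0 = x ∧ f n = y ∧
        (∀ k < n, adjacent (f k) (f (k + 1))) ∧ (∀ k ≤ n, f k ∈ D) := by
    intro x hx y hy ε hε n hn
    have hmem : ∀ k ≤ n, content x + ε * k ∈ content '' D := fun k hk =>
      hconv.uIcc_subset ⟨x, hx, rfl⟩ ⟨y, hy, rfl⟩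
        (by rw [mem_uIcc]; rcases hε with rfl | rfl <;> omega)
    refine ⟨fun k => g (content x + ε * k), ?_, ?_, fun k hk => ?_,
      fun k hk => (hg _ (hmem k hk)).1⟩
    · simpa using hinj.leftInvOn_invFunOn hx
    · simpa [← hn] using hinj.leftInvOn_invFunOn hy
    · obtain ⟨hk1, hk1'⟩ := hg _ (hmem k hk.le)
      obtain ⟨hk2, hk2'⟩ := hg _ (hmem (k + 1) hk)
      rcases hε with rfl | rfl
      · exact adjacent_of_content_eq_add_one hinj hk1 hk2 (by rw [hk1', hk2']; push_cast; ring)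
      · exact adjacent_symm (adjacent_of_content_eq_add_one hinj hk2 hk1
          (by rw [hk1', hk2']; push_cast; ring))
  intro x hx y hy
  rcases le_total (content x) (content y) with h | h
  · exact ⟨_, hpath x hx y hy 1 (Or.inl rfl) (content y - content x).toNat (by omega)⟩
  · exact ⟨_, hpath x hx y hy (-1) (Or.inr rfl) (content x - content y).toNat (by omega)⟩

lemma ncard_setOf_intCast_eq_one [NeZero e] {α : Type*} {S : Set α} {g : α → ℤ} (hS : S.Finite)
    (hg : InjOn g S) (hconv : (g '' S).OrdConnected) (hcard : S.ncard = e) (f : ZMod e) :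
    {x ∈ S | (g x : ZMod e) = f}.ncard = 1 := by
  have hres : InjOn (fun x => (g x : ZMod e)) S := by
    intro x hx y hy hxy
    apply hg hx hy
    wlog hle : g x ≤ g y generalizing x y
    · exact (this hy hx hxy.symm (le_of_not_ge hle)).symm
    obtain ⟨k, hk⟩ := (ZMod.intCast_eq_intCast_iff_dvd_sub _ _ _).mp hxy
    by_contra hne
    have hk1 : 1 ≤ k := by
      have : 0 < (e : ℤ) * k := by omega
      exact pos_of_mul_pos_right this (by positivity)
    have hsub : Icc (g x) (g y) ⊆ g '' S := hconv.out ⟨x, hx, rfl⟩ ⟨y, hy, rfl⟩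
    have hle' := ncard_le_ncard hsub (hS.image g)
    rw [hg.ncard_image, hcard, ← Finset.coe_Icc, ncard_coe_finset, Int.card_Icc] at hle'
    have : (e : ℤ) ≤ e * k := le_mul_of_one_le_right (by positivity) hk1
    omega
  have himg : (fun x => (g x : ZMod e)) '' S = univ :=
    eq_of_subset_of_ncard_le (subset_univ _)
      (by rw [ncard_univ, Nat.card_zmod, hres.ncard_image, hcard])
  obtain ⟨x, hx, rfl⟩ : f ∈ (fun x => (g x : ZMod e)) '' S := himg ▸ mem_univ f
  exact ncard_eq_one.mpr ⟨x, Set.ext fun y =>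
    ⟨fun hy => hres hy.1 hx hy.2, by rintro rfl; exact ⟨hx, rfl⟩⟩⟩

lemma resCount_eq_ncard (p : Partition') (f : ZMod e) :
    resCount e 0 p f = {x ∈ p.cells | (content x : ZMod e) = f}.ncard := by
  simp only [resCount, content, add_zero]

lemma size_add_of_addRimHook (h : AddRimHook s q e) : s.size + e = q.size := by
  obtain ⟨hsub, hcard, -, -⟩ := h
  rw [size, size, ← hcard, add_comm, ncard_sdiff_add_ncard_of_subset hsub (cells_finite q)]

lemma resCount_of_addRimHook [NeZero e] (h : AddRimHook s q e) (f : ZMod e) :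
    resCount e 0 q f = resCount e 0 s f + 1 := by
  obtain ⟨hsub, hcard, hconn, h2⟩ := h
  have hsplit : {x ∈ q.cells | (content x : ZMod e) = f} =
      {x ∈ s.cells | (content x : ZMod e) = f} ∪
        {x ∈ q.cells \ s.cells | (content x : ZMod e) = f} := by
    ext x
    constructor
    · rintro ⟨hx, hf⟩
      by_cases hxs : x ∈ s.cells
      exacts [Or.inl ⟨hxs, hf⟩, Or.inr ⟨⟨hx, hxs⟩, hf⟩]
    · rintro (⟨hx, hf⟩ | ⟨⟨hx, -⟩, hf⟩)
      exacts [⟨hsub hx, hf⟩, ⟨hx, hf⟩]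
  have hdisj : Disjoint {x ∈ s.cells | (content x : ZMod e) = f}
      {x ∈ q.cells \ s.cells | (content x : ZMod e) = f} :=
    disjoint_left.mpr fun x hx hx' => hx'.1.2 hx.1
  have hfin := cells_finite q
  rw [resCount_eq_ncard, resCount_eq_ncard, hsplit,
    ncard_union_eq hdisj ((cells_finite s).subset fun x hx => hx.1)
      (hfin.subset fun x hx => hx.1.1),
    ncard_setOf_intCast_eq_one (hfin.subset sdiff_subset) (content_injOn_of_no2x2 h2)
      (ordConnected_content_image hconn) hcard]

lemma exists_resCount_eq_add_of_reflTransGen [NeZero e] {c : Partition'}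
    (h : Relation.ReflTransGen (fun a b => AddRimHook b a e) p c) :
    ∃ k : ℕ, p.size = c.size + e * k ∧ ∀ f, resCount e 0 p f = resCount e 0 c f + k := by
  induction h with
  | refl => exact ⟨0, rfl, fun _ => rfl⟩
  | tail _ hbc ih =>
    obtain ⟨k, hsize, hres⟩ := ih
    refine ⟨k + 1, ?_, fun f => ?_⟩
    · rw [hsize, ← size_add_of_addRimHook hbc]; ring
    · rw [hres, resCount_of_addRimHook hbc]; ring

lemma exists_reflTransGen_isCore (he : 0 < e) (p : Partition') :
    ∃ c, Relation.ReflTransGen (fun a b => AddRimHook b a e) p c ∧ IsCore e c := by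
  induction hn : p.size using Nat.strong_induction_on generalizing p with
  | _ n ih =>
    by_cases hp : IsCore e p
    · exact ⟨p, .refl, hp⟩
    · obtain ⟨s, hs⟩ := not_not.mp hp
      obtain ⟨c, hsc, hc⟩ := ih s.size (by have := size_add_of_addRimHook hs; omega) s rfl
      exact ⟨c, .head hs hsc, hc⟩

/-- The β-numbers of `p`, in decreasing order, after the bead at `p.beta i₀` moves to the vacant
position `t`. -/
def movedBeta (p : Partition') (i₀ : ℕ) (t : ℤ) (a : ℕ) : ℤ :=
  if a < i₀ then p.beta a else min (p.beta a) (max (p.beta (a + 1)) t)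

section moveBead

variable {i₀ : ℕ} {t : ℤ}

lemma movedBeta_of_lt {a : ℕ} (h : a < i₀) : movedBeta p i₀ t a = p.beta a := if_pos h

lemma movedBeta_of_le {a : ℕ} (h : i₀ ≤ a) :
    movedBeta p i₀ t a = min (p.beta a) (max (p.beta (a + 1)) t) := if_neg (not_lt.mpr h)

lemma movedBeta_le (a : ℕ) : movedBeta p i₀ t a ≤ p.beta a := by
  rcases lt_or_ge a i₀ with h | h
  · rw [movedBeta_of_lt h]
  · rw [movedBeta_of_le h]; omega

lemma beta_succ_le_movedBeta (a : ℕ) : p.beta (a + 1) ≤ movedBeta p i₀ t a := by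
  have := p.beta_strictAnti (Nat.lt_add_one a)
  rcases lt_or_ge a i₀ with h | h
  · rw [movedBeta_of_lt h]; omega
  · rw [movedBeta_of_le h]; omega

lemma movedBeta_strictAnti (ht : t ∉ Set.range p.beta) : StrictAnti (movedBeta p i₀ t) := by
  refine strictAnti_nat_of_succ_lt fun a => ?_
  have h1 := p.beta_strictAnti (Nat.lt_add_one a)
  have h2 := p.beta_strictAnti (Nat.lt_add_one (a + 1))
  have h3 : t ≠ p.beta (a + 1) := fun h => ht ⟨a + 1, h.symm⟩
  have h4 := movedBeta_le (p := p) (i₀ := i₀) (t := t) (a + 1)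
  rcases lt_or_ge a i₀ with h | h
  · rw [movedBeta_of_lt h]; omega
  · rw [movedBeta_of_le h, movedBeta_of_le (by omega)]; omega

lemma neg_sub_one_le_movedBeta (ht : t ∉ Set.range p.beta) (a : ℕ) :
    -(a : ℤ) - 1 ≤ movedBeta p i₀ t a := by
  have h1 := p.neg_sub_one_le_beta a
  have h2 := beta_succ_le_movedBeta (p := p) (i₀ := i₀) (t := t) a
  by_contra! h
  have hlow : p.beta (a + 1) = -((a + 1 : ℕ) : ℤ) - 1 := by
    have := p.neg_sub_one_le_beta (a + 1); push_cast; omega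
  have hzero : ∀ i, a + 1 ≤ i → p.parts i = 0 := fun i hi => by
    have := p.antitone hi
    simp only [beta] at hlow
    omega
  have ht' : t ≤ -((a + 1 : ℕ) : ℤ) - 1 := by
    rcases lt_or_ge a i₀ with h' | h'
    · rw [movedBeta_of_lt h'] at h; omega
    · rw [movedBeta_of_le h'] at h; push_cast; omega
  exact ht (mem_range_beta_eq_of_le hzero ht')

def moveBead (p : Partition') (i₀ : ℕ) (t : ℤ) (ht : t ∉ Set.range p.beta) : Partition' where
  parts a := (movedBeta p i₀ t a + a + 1).toNat
  antitone := antitone_nat_of_succ_le fun a => by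
    have := movedBeta_strictAnti (i₀ := i₀) ht (Nat.lt_add_one a)
    push_cast
    omega
  finite_support := by
    obtain ⟨N, hN⟩ := p.finite_support
    refine ⟨N, fun i hi => ?_⟩
    have := movedBeta_le (p := p) (i₀ := i₀) (t := t) i
    rw [beta_eq_of_le hN hi] at this
    omega

lemma beta_moveBead (ht : t ∉ Set.range p.beta) : (moveBead p i₀ t ht).beta = movedBeta p i₀ t := by
  funext a
  have := neg_sub_one_le_movedBeta (i₀ := i₀) ht a
  simp only [beta, moveBead]
  omega

lemma content_image_moveBead (ht : t ∉ Set.range p.beta) :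
    content '' (p.cells \ (moveBead p i₀ t ht).cells) = Ioc t (p.beta i₀) := by
  ext k
  simp only [mem_image, mem_cells_sdiff_iff_beta, beta_moveBead, mem_Ioc]
  constructor
  · rintro ⟨x, ⟨hx1, hx2⟩, rfl⟩
    have := p.beta_strictAnti.antitone (a := i₀) (b := x.1)
    rcases lt_or_ge x.1 i₀ with h | h
    · rw [movedBeta_of_lt h] at hx1; omega
    · rw [movedBeta_of_le h] at hx1; omega
  · rintro ⟨hk1, hk2⟩
    obtain ⟨a, ha, hak, hka⟩ := p.exists_beta_succ_lt_le hk2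
    have hlow := neg_sub_one_le_movedBeta (i₀ := i₀) ht a
    have hmoved : movedBeta p i₀ t a < k := by rw [movedBeta_of_le ha]; omega
    exact ⟨(a, (k + a).toNat), ⟨by simp only [content]; omega, by simp only [content]; omega⟩,
      by simp only [content]; omega⟩

lemma addRimHook_moveBead (ht : t ∉ Set.range p.beta) :
    AddRimHook (moveBead p i₀ t ht) p (p.beta i₀ - t).toNat := by
  have hsub : (moveBead p i₀ t ht).cells ⊆ p.cells := fun ⟨a, c⟩ h => by
    have hle := movedBeta_le (p := p) (i₀ := i₀) (t := t) a
    have := neg_sub_one_le_movedBeta (i₀ := i₀) ht a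
    rw [mem_cells] at h ⊢
    simp only [moveBead] at h
    simp only [beta] at hle
    omega
  have h2 : No2x2 (p.cells \ (moveBead p i₀ t ht).cells) := by
    rintro i j ⟨h1, -, -, h4⟩
    rw [mem_cells_sdiff_iff_beta, beta_moveBead] at h1 h4
    have := beta_succ_le_movedBeta (p := p) (i₀ := i₀) (t := t) i
    simp only [content] at h1 h4
    push_cast at h1 h4
    omega
  have hinj := content_injOn_of_no2x2 h2
  have himg := content_image_moveBead (i₀ := i₀) ht
  refine ⟨hsub, ?_, connectedSet_of_injOn_content hinj (himg ▸ ordConnected_Ioc), h2⟩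
  rw [← hinj.ncard_image, himg, ← Finset.coe_Ioc, ncard_coe_finset, Int.card_Ioc]

end moveBead

lemma sub_mem_range_beta_of_isCore (hp : IsCore e p) :
    ∀ y ∈ Set.range p.beta, y - e ∈ Set.range p.beta := by
  rintro _ ⟨i, rfl⟩
  by_contra ht
  exact hp ⟨_, by simpa using addRimHook_moveBead (i₀ := i) ht⟩

end

section

open Set Finset

lemma sum_range_ite_sub_ite_add_one (f : ZMod e) (i L : ℕ) :
    ∑ j ∈ range L, ((if (content (i, j) : ZMod e) = f then 1 else 0) -
      (if (content (i, j) : ZMod e) = f + 1 then 1 else 0) : ℤ) =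
      (if ((content (i, L) - 1 : ℤ) : ZMod e) = f then 1 else 0) -
      (if ((content (i, 0) - 1 : ℤ) : ZMod e) = f then 1 else 0) := by
  induction L with
  | zero => simp
  | succ L ih =>
    have hshift : (content (i, L) : ZMod e) = f + 1 ↔ ((content (i, L) - 1 : ℤ) : ZMod e) = f := by
      push_cast
      constructor <;> intro h <;> linear_combination h
    have hsucc : content (i, L + 1) - 1 = content (i, L) := by simp [content]; ring
    rw [sum_range_succ, ih, if_congr hshift rfl rfl, hsucc]
    ring

lemma resCount_eq_sum {N : ℕ} (hN : ∀ i, N ≤ i → p.parts i = 0) (f : ZMod e) :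
    resCount e 0 p f = ∑ i ∈ range N, ∑ j ∈ range (p.parts i),
      if (content (i, j) : ZMod e) = f then 1 else 0 := by
  classical
  have hset : {x ∈ p.cells | (content x : ZMod e) = f} =
      ↑((range N ×ˢ range (p.parts 0)).filter fun x => x ∈ p.cells ∧ (content x : ZMod e) = f) := by
    ext ⟨a, c⟩
    simp only [Set.mem_ofPred_eq, coe_filter, mem_product, Finset.mem_range, mem_cells]
    refine ⟨fun h => ⟨⟨?_, lt_of_lt_of_le h.1 (p.antitone (Nat.zero_le a))⟩, h⟩, fun h => h.2⟩
    by_contra! ha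
    have := hN a ha
    omega
  rw [resCount_eq_ncard, hset, ncard_coe_finset, card_filter, sum_product]
  refine sum_congr rfl fun i _ => ?_
  refine (sum_subset (range_subset_range.mpr (p.antitone (Nat.zero_le i)))
    fun j _ hj => ?_).symm.trans (sum_congr rfl fun j hj => ?_)
  · rw [Finset.mem_range, not_lt] at hj
    simp [mem_cells, hj]
  · simp [mem_cells, Finset.mem_range.mp hj]

lemma resCount_sub_resCount_add_one {N : ℕ} (hN : ∀ i, N ≤ i → p.parts i = 0) (f : ZMod e) :
    (resCount e 0 p f : ℤ) - resCount e 0 p (f + 1) =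
      ∑ i ∈ range N, ((if (p.beta i : ZMod e) = f then 1 else 0) -
        (if ((-(i : ℤ) - 1 : ℤ) : ZMod e) = f then 1 else 0)) := by
  rw [resCount_eq_sum hN, resCount_eq_sum hN]
  push_cast
  rw [← sum_sub_distrib]
  refine sum_congr rfl fun i _ => ?_
  rw [← sum_sub_distrib, sum_range_ite_sub_ite_add_one]
  simp [content, beta]

lemma mem_of_intCast_eq_of_le {B : Set ℤ} (hB : ∀ y ∈ B, y - e ∈ B) {x y : ℤ} (hy : y ∈ B)
    (hxy : x ≤ y) (h : (x : ZMod e) = y) : x ∈ B := by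
  obtain ⟨k, hk⟩ := (ZMod.intCast_eq_intCast_iff_dvd_sub x y e).mp h
  have hdown : ∀ n : ℕ, y - e * n ∈ B := by
    intro n
    induction n with
    | zero => simpa
    | succ n ih => convert hB _ ih using 1; push_cast; ring
  rcases Nat.eq_zero_or_pos e with he | he
  · subst he
    obtain rfl : x = y := by simp at hk; omega
    exact hy
  · obtain ⟨n, rfl⟩ : ∃ n : ℕ, k = n := ⟨k.toNat, by
      have : 0 ≤ k := by by_contra! hk'; nlinarith
      omega⟩
    convert hdown n using 1
    omega

/-- On the residue class of `x`, both `S` and `T` are initial segments above `a`, so one contains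
the other. -/
lemma mem_of_card_filter_le {S T : Finset ℤ} {a x : ℤ}
    (hS : ∀ y ∈ S, ∀ z, a ≤ z → z ≤ y → (z : ZMod e) = y → z ∈ S)
    (hT : ∀ y ∈ T, ∀ z, a ≤ z → z ≤ y → (z : ZMod e) = y → z ∈ T)
    (hTa : ∀ y ∈ T, a ≤ y) (hax : a ≤ x) (hx : x ∈ S)
    (hcard : #(S.filter fun y : ℤ => (y : ZMod e) = x) ≤
      #(T.filter fun y : ℤ => (y : ZMod e) = x)) :
    x ∈ T := by
  by_contra hxT
  have hsub :
      (T.filter fun y : ℤ => (y : ZMod e) = x) ⊂ S.filter fun y : ℤ => (y : ZMod e) = x := by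
    refine (Finset.ssubset_iff_of_subset fun y hy => ?_).mpr
      ⟨x, mem_filter.mpr ⟨hx, rfl⟩, fun h => hxT (mem_filter.mp h).1⟩
    obtain ⟨hyT, hyx⟩ := mem_filter.mp hy
    refine mem_filter.mpr ⟨hS x hx y (hTa y hyT) ?_ hyx, hyx⟩
    by_contra! hxy
    exact hxT (hT y hyT x hax hxy.le hyx.symm)
  exact absurd hcard (not_le.mpr (card_lt_card hsub))

lemma mem_image_beta_iff {N : ℕ} (hN : ∀ i, N ≤ i → p.parts i = 0) {x : ℤ} :
    x ∈ (range N).image p.beta ↔ x ∈ Set.range p.beta ∧ -(N : ℤ) ≤ x := by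
  constructor
  · rintro h
    obtain ⟨i, hi, rfl⟩ := Finset.mem_image.mp h
    have := p.neg_sub_one_le_beta i
    exact ⟨⟨i, rfl⟩, by rw [Finset.mem_range] at hi; omega⟩
  · rintro ⟨⟨i, rfl⟩, hx⟩
    refine Finset.mem_image.mpr ⟨i, Finset.mem_range.mpr ?_, rfl⟩
    by_contra! hi
    rw [beta_eq_of_le hN hi] at hx
    omega

lemma card_filter_image_beta (p : Partition') (N : ℕ) (f : ZMod e) :
    (#(((range N).image p.beta).filter fun y : ℤ => (y : ZMod e) = f) : ℤ) =
      ∑ i ∈ range N, if (p.beta i : ZMod e) = f then 1 else 0 := by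
  rw [filter_image, card_image_of_injective _ p.beta_strictAnti.injective, card_filter]
  push_cast
  rfl

lemma range_beta_subset [NeZero e] (hp : ∀ y ∈ Set.range p.beta, y - e ∈ Set.range p.beta)
    (hq : ∀ y ∈ Set.range q.beta, y - e ∈ Set.range q.beta)
    (h : ∀ f : ZMod e, (resCount e 0 p f : ℤ) - resCount e 0 p (f + 1) =
      resCount e 0 q f - resCount e 0 q (f + 1)) :
    Set.range p.beta ⊆ Set.range q.beta := by
  intro x hx
  obtain ⟨Np, hNp⟩ := p.finite_support
  obtain ⟨Nq, hNq⟩ := q.finite_support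
  set N := max (max Np Nq) (-x).toNat
  have hNp' : ∀ i, N ≤ i → p.parts i = 0 := fun i hi => hNp i (by omega)
  have hNq' : ∀ i, N ≤ i → q.parts i = 0 := fun i hi => hNq i (by omega)
  have hclosed : ∀ r : Partition', (∀ y ∈ Set.range r.beta, y - e ∈ Set.range r.beta) →
      (∀ i, N ≤ i → r.parts i = 0) → ∀ y ∈ (range N).image r.beta, ∀ z, -(N : ℤ) ≤ z → z ≤ y →
        (z : ZMod e) = y → z ∈ (range N).image r.beta := by
    intro r hr hN y hy z hz hzy hzy'
    exact (mem_image_beta_iff hN).mpr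
      ⟨mem_of_intCast_eq_of_le hr ((mem_image_beta_iff hN).mp hy).1 hzy hzy', hz⟩
  have hcard := h x
  rw [resCount_sub_resCount_add_one hNp', resCount_sub_resCount_add_one hNq', sum_sub_distrib,
    sum_sub_distrib, sub_left_inj, ← card_filter_image_beta, ← card_filter_image_beta] at hcard
  have hxN : -(N : ℤ) ≤ x := by omega
  exact ((mem_image_beta_iff hNq').mp (mem_of_card_filter_le (hclosed p hp hNp')
    (hclosed q hq hNq') (fun y hy => ((mem_image_beta_iff hNq').mp hy).2) hxN
    ((mem_image_beta_iff hNp').mpr ⟨hx, hxN⟩) (by exact_mod_cast hcard.le))).1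

lemma eq_of_resCount_eq_add [NeZero e] (hp : ∀ y ∈ Set.range p.beta, y - e ∈ Set.range p.beta)
    (hq : ∀ y ∈ Set.range q.beta, y - e ∈ Set.range q.beta) (d : ℤ)
    (h : ∀ f : ZMod e, (resCount e 0 p f : ℤ) = resCount e 0 q f + d) : p = q := by
  have hdiff : ∀ f : ZMod e, (resCount e 0 p f : ℤ) - resCount e 0 p (f + 1) =
      resCount e 0 q f - resCount e 0 q (f + 1) := fun f => by rw [h f, h (f + 1)]; ring
  refine eq_of_beta_eq ((StrictMono.range_inj p.beta_strictAnti.dual_right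
    q.beta_strictAnti.dual_right).mp (subset_antisymm (range_beta_subset hp hq hdiff)
      (range_beta_subset hq hp fun f => (hdiff f).symm)))

end

end Partition'

open Partition'

/-- Two partitions of `n` have the same `e`-core if and only if they have the same number
of nodes of each residue mod `e`. -/
theorem stmt9 (e n : ℕ) (he : 2 ≤ e) (p q : Partition')
    (hp : p.size = n) (hq : q.size = n) :
    (∃ c : Partition', Relation.ReflTransGen (fun a b => Partition'.AddRimHook b a e) p c ∧
        Relation.ReflTransGen (fun a b => Partition'.AddRimHook b a e) q c ∧
        ¬ ∃ s, Partition'.AddRimHook s c e)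
      ↔ ∀ f : ZMod e, Partition'.resCount e 0 p f = Partition'.resCount e 0 q f := by
  have : NeZero e := ⟨by omega⟩
  constructor
  · rintro ⟨c, hpc, hqc, -⟩ f
    obtain ⟨kp, hsp, hkp⟩ := exists_resCount_eq_add_of_reflTransGen hpc
    obtain ⟨kq, hsq, hkq⟩ := exists_resCount_eq_add_of_reflTransGen hqc
    obtain rfl : kp = kq :=
      Nat.eq_of_mul_eq_mul_left (show 0 < e by omega) (by omega : e * kp = e * kq)
    rw [hkp, hkq]
  · intro h
    obtain ⟨cp, hpc, hcp⟩ := exists_reflTransGen_isCore (show 0 < e by omega) p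
    obtain ⟨cq, hqc, hcq⟩ := exists_reflTransGen_isCore (show 0 < e by omega) q
    obtain ⟨kp, -, hkp⟩ := exists_resCount_eq_add_of_reflTransGen hpc
    obtain ⟨kq, -, hkq⟩ := exists_resCount_eq_add_of_reflTransGen hqc
    obtain rfl : cp = cq := eq_of_resCount_eq_add (sub_mem_range_beta_of_isCore hcp)
      (sub_mem_range_beta_of_isCore hcq) ((kq : ℤ) - kp) fun f => by
        have := h f; rw [hkp, hkq] at this; omega
    exact ⟨cp, hpc, hqc, hcp⟩
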